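/- Let θ be a finite Borel measure on O(n) with θ(O(n)) ≤ 1 satisfying θ({g : |x - g(z)| < r}) ≤ (r/|z|)^β for all nonzero x, z ∈ ℝⁿ and r > 0, where β > 0. Let 0 < u < n with β + u - n > 0. Then for all x, z ∈ ℝⁿ with |z|/2 ≤ |x| ≤ 2|z| and z ≠ 0, we have ∫ |x - g(z)|^{u-n} dθ(g) ≤ C(n, u, β)·|z|^{u-n}. -/
import Mathlib


open MeasureTheory Metric Set

theorem stmt3 (n : ℕ) (u β : ℝ) (hu : 0 < u) (hun : u < n) (hβ0 : 0 < β)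
    (hβ : (n : ℝ) - u < β)
    [MeasurableSpace (EuclideanSpace ℝ (Fin n) ≃ₗᵢ[ℝ] EuclideanSpace ℝ (Fin n))] :
    ∃ C : ℝ, 0 < C ∧
      ∀ θ : Measure (EuclideanSpace ℝ (Fin n) ≃ₗᵢ[ℝ] EuclideanSpace ℝ (Fin n)),
        θ Set.univ ≤ 1 →
        (∀ x z : EuclideanSpace ℝ (Fin n), x ≠ 0 → z ≠ 0 → ∀ r : ℝ, 0 < r →
          θ {g | ‖x - g z‖ < r} ≤ ENNReal.ofReal ((r / ‖z‖) ^ β)) →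
        ∀ x z : EuclideanSpace ℝ (Fin n), z ≠ 0 →
          ‖z‖ / 2 ≤ ‖x‖ → ‖x‖ ≤ 2 * ‖z‖ →
          ∫⁻ g, ENNReal.ofReal (‖x - g z‖ ^ (u - n)) ∂θ ≤
            ENNReal.ofReal (C * ‖z‖ ^ (u - n)) := by
  have h2 : (0:ℝ) < 2 := two_pos
  set q : ℝ := (2:ℝ) ^ ((n - u) - β) with hqdef
  have hq0 : 0 < q := Real.rpow_pos_of_pos h2 _
  have hq1 : q < 1 := Real.rpow_lt_one_of_one_lt_of_neg one_lt_two (by linarith)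
  have h1q : 0 < 1 - q := by linarith
  set C0 : ℝ := (4:ℝ) ^ (u - n) * 4 ^ β * 2 ^ ((n:ℝ) - u) with hC0def
  have hC00 : 0 < C0 := by positivity
  refine ⟨C0 * (1 - q)⁻¹, by positivity, ?_⟩
  intro θ hθ1 hθβ x z hz hxz1 hxz2
  have hzpos : 0 < ‖z‖ := norm_pos_iff.2 hz
  have hxpos : 0 < ‖x‖ := by linarith
  have hx : x ≠ 0 := norm_pos_iff.1 hxpos
  set R : ℝ := 4 * ‖z‖ with hRdef
  have hR : 0 < R := by positivity
  set A : ℕ → Set (EuclideanSpace ℝ (Fin n) ≃ₗᵢ[ℝ] EuclideanSpace ℝ (Fin n)) :=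
    fun k => {g | ‖x - g z‖ < R * 2 ^ (-(k:ℝ))} with hAdef
  set B : ℕ → Set (EuclideanSpace ℝ (Fin n) ≃ₗᵢ[ℝ] EuclideanSpace ℝ (Fin n)) :=
    fun k => toMeasurable θ (A k) with hBdef
  have hBm : ∀ k, MeasurableSet (B k) := fun k => measurableSet_toMeasurable θ (A k)
  set D : ℕ → ENNReal := fun k => ENNReal.ofReal ((R * 2 ^ (-(k:ℝ) - 1)) ^ (u - n)) with hDdef
  -- bound on θ (A k)
  have hθA : ∀ k : ℕ, θ (A k) ≤ ENNReal.ofReal ((4 * 2 ^ (-(k:ℝ))) ^ β) := by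
    intro k
    have hrpos : 0 < R * 2 ^ (-(k:ℝ)) := by positivity
    have := hθβ x z hx hz (R * 2 ^ (-(k:ℝ))) hrpos
    have heq : R * 2 ^ (-(k:ℝ)) / ‖z‖ = 4 * 2 ^ (-(k:ℝ)) := by
      rw [hRdef]; field_simp
    rw [heq] at this
    exact this
  -- pointwise bound
  have hpoint : ∀ g, ENNReal.ofReal (‖x - g z‖ ^ (u - n)) ≤
      ∑' k, (B k).indicator (fun _ => D k) g := by
    intro g
    rcases eq_or_lt_of_le (norm_nonneg (x - g z)) with h0 | ht
    · rw [← h0, Real.zero_rpow (ne_of_lt (by linarith : u - (n:ℝ) < 0))]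
      simp
    · set t : ℝ := ‖x - g z‖ with htdef
      have htR : t < R := by
        have h1 : t ≤ ‖x‖ + ‖g z‖ := norm_sub_le x (g z)
        have h2' : ‖g z‖ = ‖z‖ := g.norm_map z
        rw [hRdef]; rw [h2'] at h1; linarith
      have hex : ∃ k : ℕ, R * 2 ^ (-(k:ℝ) - 1) ≤ t := by
        obtain ⟨k, hk⟩ := exists_pow_lt_of_lt_one (div_pos ht hR) (by norm_num : (1/2:ℝ) < 1)
        refine ⟨k, ?_⟩
        have e1 : (2:ℝ) ^ (-(k:ℝ) - 1) ≤ (1/2:ℝ) ^ k := by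
          have e2 : (2:ℝ) ^ (-(k:ℝ)) = (1/2:ℝ) ^ k := by
            rw [Real.rpow_neg (by norm_num), Real.rpow_natCast, one_div, inv_pow]
          rw [← e2]
          exact Real.rpow_le_rpow_of_exponent_le one_le_two (by linarith)
        have e3 : R * (1/2:ℝ) ^ k < t := by
          have := (mul_lt_mul_of_pos_left hk hR)
          rwa [mul_div_cancel₀ _ (ne_of_gt hR)] at this
        nlinarith [mul_le_mul_of_nonneg_left e1 hR.le]
      obtain ⟨K, hK1, hK2⟩ : ∃ K : ℕ, R * 2 ^ (-(K:ℝ) - 1) ≤ t ∧ t < R * 2 ^ (-(K:ℝ)) := by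
        refine ⟨Nat.find hex, Nat.find_spec hex, ?_⟩
        rcases eq_or_ne (Nat.find hex) 0 with hf0 | hf0
        · rw [hf0]
          norm_num
          exact htR
        · obtain ⟨m, hm⟩ := Nat.exists_eq_succ_of_ne_zero hf0
          have hmin := Nat.find_min hex (show m < Nat.find hex by omega)
          push_neg at hmin
          have hc : (-(((m+1):ℕ):ℝ)) = -(m:ℝ) - 1 := by push_cast; ring
          rw [hm, hc]
          exact hmin
      have hgA : g ∈ A K := hK2
      have hgB : g ∈ B K := subset_toMeasurable θ (A K) hgA
      calc ENNReal.ofReal (t ^ (u - n)) ≤ D K := by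
            apply ENNReal.ofReal_le_ofReal
            exact Real.rpow_le_rpow_of_nonpos (by positivity) hK1 (by push_cast; linarith)
        _ = (B K).indicator (fun _ => D K) g := by rw [Set.indicator_of_mem hgB]
        _ ≤ ∑' k, (B k).indicator (fun _ => D k) g := ENNReal.le_tsum K
  -- key real identity
  have key : ∀ k : ℕ, (R * 2 ^ (-(k:ℝ) - 1)) ^ (u - n) * (4 * 2 ^ (-(k:ℝ))) ^ β
      = (C0 * ‖z‖ ^ (u - n)) * q ^ k := by
    intro k
    rw [hC0def, hqdef, hRdef]
    rw [show (4:ℝ) * ‖z‖ * 2 ^ (-(k:ℝ) - 1) = 4 * (‖z‖ * 2 ^ (-(k:ℝ) - 1)) by ring]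
    rw [Real.mul_rpow (by norm_num) (by positivity),
        Real.mul_rpow (by positivity) (by positivity),
        Real.mul_rpow (by norm_num) (by positivity),
        ← Real.rpow_natCast ((2:ℝ) ^ ((↑n - u) - β)) k,
        ← Real.rpow_mul h2.le, ← Real.rpow_mul h2.le, ← Real.rpow_mul h2.le]
    rw [show (4:ℝ) ^ (u - ↑n) * (‖z‖ ^ (u - ↑n) * 2 ^ ((-(k:ℝ) - 1) * (u - ↑n))) *
          (4 ^ β * 2 ^ (-(k:ℝ) * β))
        = (4:ℝ) ^ (u - ↑n) * 4 ^ β * ‖z‖ ^ (u - ↑n) *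
            (2 ^ ((-(k:ℝ) - 1) * (u - ↑n)) * 2 ^ (-(k:ℝ) * β)) by ring]
    rw [← Real.rpow_add h2,
        show ((-(k:ℝ) - 1) * (u - ↑n) + -(k:ℝ) * β) = (↑n - u) + (↑n - u - β) * ↑k by ring,
        Real.rpow_add h2]
    ring
  -- termwise bound
  have hterm : ∀ k : ℕ, D k * θ (A k) ≤ ENNReal.ofReal ((C0 * ‖z‖ ^ (u - n)) * q ^ k) := by
    intro k
    calc D k * θ (A k) ≤ D k * ENNReal.ofReal ((4 * 2 ^ (-(k:ℝ))) ^ β) :=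
          mul_le_mul_right (hθA k) _
      _ = ENNReal.ofReal ((R * 2 ^ (-(k:ℝ) - 1)) ^ (u - n) * (4 * 2 ^ (-(k:ℝ))) ^ β) := by
          rw [hDdef, ← ENNReal.ofReal_mul (by positivity)]
      _ = ENNReal.ofReal ((C0 * ‖z‖ ^ (u - n)) * q ^ k) := by rw [key k]
  calc ∫⁻ g, ENNReal.ofReal (‖x - g z‖ ^ (u - n)) ∂θ
      ≤ ∫⁻ g, ∑' k, (B k).indicator (fun _ => D k) g ∂θ := lintegral_mono hpoint
    _ = ∑' k, ∫⁻ g, (B k).indicator (fun _ => D k) g ∂θ :=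
        lintegral_tsum fun k => (measurable_const.indicator (hBm k)).aemeasurable
    _ = ∑' k, D k * θ (B k) := by
        refine tsum_congr fun k => ?_
        rw [lintegral_indicator_const (hBm k)]
    _ = ∑' k, D k * θ (A k) := by
        refine tsum_congr fun k => ?_
        rw [hBdef, measure_toMeasurable]
    _ ≤ ∑' k, ENNReal.ofReal ((C0 * ‖z‖ ^ (u - n)) * q ^ k) := ENNReal.tsum_le_tsum hterm
    _ = ENNReal.ofReal (∑' k : ℕ, (C0 * ‖z‖ ^ (u - n)) * q ^ k) :=
        (ENNReal.ofReal_tsum_of_nonneg (fun k => by positivity)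
          ((summable_geometric_of_lt_one hq0.le hq1).mul_left _)).symm
    _ = ENNReal.ofReal (C0 * (1 - q)⁻¹ * ‖z‖ ^ (u - n)) := by
        rw [tsum_mul_left, tsum_geometric_of_lt_one hq0.le hq1]
        congr 1; ring
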